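/- Let W be a Morse sequence on K. (1) If z is a p-cycle of the critical complex (i.e. z ∈ Ŵ[p] and ∂̂_p(z) = 0), then ∧̃_p(z) is a p-cycle of K (∂_p(∧̃_p(z)) = 0). (2) If z ∈ Ŵ[p] and δ̂_p(z) = 0, then δ_p(∨̃_p(z)) = 0. -/
import Mathlib


/-! ## Basic notions: simplicial complexes, collapses, expansions, fillings -/

variable {V : Type*} [DecidableEq V]

/-- A (finite) simplicial complex: a finite collection of nonempty finite sets that is
closed under taking nonempty subsets. -/
def IsComplex (K : Finset (Finset V)) : Prop :=
  ∀ τ ∈ K, τ.Nonempty ∧ ∀ σ, σ ⊆ τ → σ.Nonempty → σ ∈ K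

/-- `ν` is a facet (inclusion-maximal face) of `K`. -/
def IsFacet (K : Finset (Finset V)) (ν : Finset V) : Prop :=
  ν ∈ K ∧ ∀ ρ ∈ K, ν ⊆ ρ → ρ = ν

/-- `(σ, τ)` is a free pair for `K`: `σ ⊊ τ` and `τ` is the only face of `K`
strictly containing `σ`. -/
def IsFreePair (K : Finset (Finset V)) (σ τ : Finset V) : Prop :=
  σ ∈ K ∧ τ ∈ K ∧ σ ⊂ τ ∧ ∀ ρ ∈ K, σ ⊂ ρ → ρ = τ

/-- `K` is an elementary expansion of `L` (equivalently, `L` is an elementary collapse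
of `K`): `L = K \ {σ, τ}` for some free pair `(σ, τ)` of `K`. -/
def ElemExpansion (L K : Finset (Finset V)) : Prop :=
  ∃ σ τ, IsFreePair K σ τ ∧ L = K \ {σ, τ}

/-- `K` is an elementary filling of `L` (equivalently, `L` is an elementary perforation
of `K`): `L = K \ {ν}` for some facet `ν` of `K`. -/
def ElemFilling (L K : Finset (Finset V)) : Prop :=
  ∃ ν, IsFacet K ν ∧ L = K \ {ν}

/-- `L` is an elementary collapse of `K`. -/
def ElemCollapse (K L : Finset (Finset V)) : Prop :=
  ∃ σ τ, IsFreePair K σ τ ∧ L = K \ {σ, τ}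

/-- `K` collapses onto `L`: there is a sequence of elementary collapses from `K` to `L`. -/
def CollapsesOnto (K L : Finset (Finset V)) : Prop :=
  Relation.ReflTransGen ElemCollapse K L

/-! ## Morse sequences -/

/-- A Morse sequence `⟨∅ = K₀, …, K_k = K⟩`: each `K_i` is a simplicial complex that is
an elementary expansion or an elementary filling of `K_{i-1}`. -/
structure MorseSeq (V : Type*) [DecidableEq V] where
  k : ℕ
  seq : ℕ → Finset (Finset V)
  cpx : ∀ i ≤ k, IsComplex (seq i)
  init : seq 0 = ∅
  step : ∀ i, 1 ≤ i → i ≤ k → ElemExpansion (seq (i - 1)) (seq i) ∨ ElemFilling (seq (i - 1)) (seq i)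

/-- The simplicial complex `K = K_k` on which the Morse sequence lives. -/
def MorseSeq.cplx (W : MorseSeq V) : Finset (Finset V) := W.seq W.k

/-- A face added by a filling step: a critical face of `W`. -/
def MorseSeq.Critical (W : MorseSeq V) (ν : Finset V) : Prop :=
  ∃ i, 1 ≤ i ∧ i ≤ W.k ∧ W.seq i \ W.seq (i - 1) = {ν}

/-- `(σ, τ)` is a regular pair for `W`: the two faces are added together by an
elementary expansion step. -/
def MorseSeq.Regular (W : MorseSeq V) (σ τ : Finset V) : Prop :=
  ∃ i, 1 ≤ i ∧ i ≤ W.k ∧ σ ⊂ τ ∧ W.seq i \ W.seq (i - 1) = {σ, τ}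

/-- `σ` is lower regular for `W`. -/
def MorseSeq.LowerRegular (W : MorseSeq V) (σ : Finset V) : Prop := ∃ τ, W.Regular σ τ

/-- `τ` is upper regular for `W`. -/
def MorseSeq.UpperRegular (W : MorseSeq V) (τ : Finset V) : Prop := ∃ σ, W.Regular σ τ

/-! ## Chains modulo 2 -/

/-- The boundary `∂(σ)` of a simplex: the chain of its (nonempty) codimension-one faces. -/
def bd (σ : Finset V) : Finset (Finset V) :=
  σ.powerset.filter fun ρ => ρ.Nonempty ∧ ρ.card + 1 = σ.card

/-- The coboundary `δ(σ)` of a simplex in `K`: the chain of faces of `K` of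
codimension one over `σ` containing `σ`. -/
def cobd (K : Finset (Finset V)) (σ : Finset V) : Finset (Finset V) :=
  K.filter fun τ => σ ⊆ τ ∧ σ.card + 1 = τ.card

/-- Mod-2 linear extension: `chainSum c f` is the sum (symmetric difference) of
the chains `f σ` over `σ ∈ c`; an element belongs to it iff it belongs to an odd
number of the `f σ`. -/
def chainSum (c : Finset (Finset V)) (f : Finset V → Finset (Finset V)) : Finset (Finset V) :=
  (c.biUnion f).filter fun ν => (c.filter fun σ => ν ∈ f σ).card % 2 = 1

/-- `c` is a `p`-chain of `K`: a set of `p`-simplices of `K`. -/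
def IsChainOf (K : Finset (Finset V)) (p : ℕ) (c : Finset (Finset V)) : Prop :=
  ∀ ν ∈ c, ν ∈ K ∧ ν.card = p + 1

/-- `c` is a chain of critical `p`-simplices of `W` (an element of `Ŵ[p]`). -/
def IsCritChain (W : MorseSeq V) (p : ℕ) (c : Finset (Finset V)) : Prop :=
  ∀ ν ∈ c, W.Critical ν ∧ ν.card = p + 1

/-! ## Frames, reference and coreference maps -/

/-- A frame on `W`: it assigns to each `p`-simplex of `K` a chain of critical
`p`-simplices of `W`. -/
def IsFrame (W : MorseSeq V) (Υ : Finset V → Finset (Finset V)) : Prop :=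
  ∀ ν ∈ W.cplx, ∀ μ ∈ Υ ν, W.Critical μ ∧ μ.card = ν.card

/-- `Λ` is the reference map of `W`: a frame with `Λ(ν) = ν` for critical `ν`, and
`Λ(τ) = 0`, `Λ(∂τ) = 0` for upper regular `τ`. -/
def IsRefMap (W : MorseSeq V) (Λ : Finset V → Finset (Finset V)) : Prop :=
  IsFrame W Λ ∧ (∀ ν, W.Critical ν → Λ ν = {ν}) ∧
    ∀ τ, W.UpperRegular τ → Λ τ = ∅ ∧ chainSum (bd τ) Λ = ∅

/-- `Λ` is the coreference map of `W`: a frame with `Λ(ν) = ν` for critical `ν`, and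
`Λ(σ) = 0`, `Λ(δσ) = 0` for lower regular `σ`. -/
def IsCorefMap (W : MorseSeq V) (Λ : Finset V → Finset (Finset V)) : Prop :=
  IsFrame W Λ ∧ (∀ ν, W.Critical ν → Λ ν = {ν}) ∧
    ∀ σ, W.LowerRegular σ → Λ σ = ∅ ∧ chainSum (cobd W.cplx σ) Λ = ∅

/-- The extension map `∧̃` of `W` (defined from the coreference map `Vee`):
`∧̃(κ) = {ν ∈ K | κ ∈ ∨(ν)}`. -/
def extMap (W : MorseSeq V) (Vee : Finset V → Finset (Finset V)) (κ : Finset V) :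
    Finset (Finset V) :=
  W.cplx.filter fun ν => κ ∈ Vee ν

/-- The coextension map `∨̃` of `W` (defined from the reference map `Λ`):
`∨̃(κ) = {ν ∈ K | κ ∈ ∧(ν)}`. -/
def coextMap (W : MorseSeq V) (Λ : Finset V → Finset (Finset V)) (κ : Finset V) :
    Finset (Finset V) :=
  W.cplx.filter fun ν => κ ∈ Λ ν

set_option linter.unusedSectionVars false
section Aux
variable {V : Type*} [DecidableEq V]

private lemma zmod2_natCast (n : ℕ) : (n : ZMod 2) = if n % 2 = 1 then 1 else 0 := by
  have h : ((n % 2 : ℕ) : ZMod 2) = (n : ZMod 2) := ZMod.natCast_mod n 2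
  rcases Nat.mod_two_eq_zero_or_one n with h2 | h2 <;> rw [← h, h2] <;> simp

lemma ind_mem_chainSum (c : Finset (Finset V)) (f : Finset V → Finset (Finset V))
    (a : Finset V) :
    (if a ∈ chainSum c f then (1:ZMod 2) else 0)
      = ∑ σ ∈ c, if a ∈ f σ then (1:ZMod 2) else 0 := by
  rw [Finset.sum_boole, zmod2_natCast]
  by_cases hodd : (c.filter fun σ => a ∈ f σ).card % 2 = 1
  · have hpos : 0 < (c.filter fun σ => a ∈ f σ).card := by
      rcases Nat.eq_zero_or_pos (c.filter fun σ => a ∈ f σ).card with h | h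
      · rw [h] at hodd; simp at hodd
      · exact h
    obtain ⟨σ, hσ⟩ := Finset.card_pos.mp hpos
    rw [Finset.mem_filter] at hσ
    have hmem : a ∈ chainSum c f := by
      unfold chainSum
      rw [Finset.mem_filter, Finset.mem_biUnion]
      exact ⟨⟨σ, hσ.1, hσ.2⟩, hodd⟩
    simp [hmem, hodd]
  · have hmem : a ∉ chainSum c f := by
      unfold chainSum
      rw [Finset.mem_filter]
      tauto
    simp [hmem, hodd]

lemma sum_ind_eq_zero_of_notMem {c : Finset (Finset V)} {f : Finset V → Finset (Finset V)}
    {a : Finset V} (h : a ∉ chainSum c f) :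
    ∑ σ ∈ c, (if a ∈ f σ then (1:ZMod 2) else 0) = 0 := by
  rw [← ind_mem_chainSum]; simp [h]

lemma chainSum_eq_empty_of (c : Finset (Finset V)) (f : Finset V → Finset (Finset V))
    (h : ∀ a, ∑ σ ∈ c, (if a ∈ f σ then (1:ZMod 2) else 0) = 0) :
    chainSum c f = ∅ := by
  rw [Finset.eq_empty_iff_forall_notMem]
  intro a ha
  have h2 := ind_mem_chainSum c f a
  rw [h a, if_pos ha] at h2
  exact one_ne_zero h2

lemma MorseSeq.seq_succ_supset (W : MorseSeq V) {n : ℕ} (h1 : 1 ≤ n) (h2 : n ≤ W.k) :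
    W.seq (n-1) ⊆ W.seq n := by
  rcases W.step n h1 h2 with ⟨σ, τ, _, hL⟩ | ⟨ν, _, hL⟩ <;> rw [hL] <;>
    exact Finset.sdiff_subset

lemma MorseSeq.seq_mono (W : MorseSeq V) {i j : ℕ} (hij : i ≤ j) (hj : j ≤ W.k) :
    W.seq i ⊆ W.seq j := by
  induction j with
  | zero => have : i = 0 := by omega
            subst this; exact subset_rfl
  | succ n ih =>
    rcases Nat.lt_or_ge i (n+1) with h | h
    · have h1 : W.seq n ⊆ W.seq (n+1) := by
        have := W.seq_succ_supset (n := n+1) (by omega) hj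
        simpa using this
      exact (ih (by omega) (by omega)).trans h1
    · have : i = n+1 := by omega
      subst this; exact subset_rfl

lemma MorseSeq.seq_subset_cplx (W : MorseSeq V) {i : ℕ} (hi : i ≤ W.k) :
    W.seq i ⊆ W.cplx := W.seq_mono hi le_rfl

private lemma diff_diff_eq {s t : Finset (Finset V)} (h : t ⊆ s) : s \ (s \ t) = t := by
  rw [Finset.sdiff_sdiff_self_left]
  exact Finset.inter_eq_right.mpr h

lemma MorseSeq.critical_of_step (W : MorseSeq V) {i : ℕ} (h1 : 1 ≤ i) (h2 : i ≤ W.k)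
    {ν : Finset V} (hfac : IsFacet (W.seq i) ν) (hL : W.seq (i-1) = W.seq i \ {ν}) :
    W.Critical ν :=
  ⟨i, h1, h2, by rw [hL, diff_diff_eq (Finset.singleton_subset_iff.mpr hfac.1)]⟩

lemma MorseSeq.regular_of_step (W : MorseSeq V) {i : ℕ} (h1 : 1 ≤ i) (h2 : i ≤ W.k)
    {σ τ : Finset V} (hfree : IsFreePair (W.seq i) σ τ)
    (hL : W.seq (i-1) = W.seq i \ {σ, τ}) : W.Regular σ τ :=
  ⟨i, h1, h2, hfree.2.2.1, by
    rw [hL, diff_diff_eq (Finset.insert_subset_iff.mpr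
      ⟨hfree.1, Finset.singleton_subset_iff.mpr hfree.2.1⟩)]⟩

lemma MorseSeq.critical_mem (W : MorseSeq V) {ν : Finset V} (h : W.Critical ν) :
    ν ∈ W.cplx := by
  obtain ⟨i, h1, h2, hd⟩ := h
  have hm : ν ∈ W.seq i \ W.seq (i-1) := by rw [hd]; exact Finset.mem_singleton_self ν
  exact W.seq_mono h2 le_rfl (Finset.mem_sdiff.mp hm).1

lemma MorseSeq.trichotomy (W : MorseSeq V) :
    ∀ ν ∈ W.cplx, W.Critical ν ∨ W.LowerRegular ν ∨ W.UpperRegular ν := by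
  suffices h : ∀ m, m ≤ W.k → ∀ ν ∈ W.seq m,
      W.Critical ν ∨ W.LowerRegular ν ∨ W.UpperRegular ν from
    fun ν hν => h W.k le_rfl ν hν
  intro m
  induction m with
  | zero => intro _ ν hν; rw [W.init] at hν; exact absurd hν (Finset.notMem_empty ν)
  | succ n ih =>
    intro hk ν hν
    by_cases h0 : ν ∈ W.seq n
    · exact ih (by omega) ν h0
    · have hstep := W.step (n+1) (by omega) hk
      simp only [Nat.add_sub_cancel] at hstep
      rcases hstep with ⟨σ, τ, hfree, hL⟩ | ⟨μ, hfac, hL⟩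
      · have hmem : ν ∈ ({σ, τ} : Finset (Finset V)) := by
          by_contra hn
          exact h0 (by rw [hL]; exact Finset.mem_sdiff.mpr ⟨hν, hn⟩)
        have hreg : W.Regular σ τ := by
          refine W.regular_of_step (by omega) hk hfree ?_
          simpa using hL
        rcases Finset.mem_insert.mp hmem with rfl | h
        · exact Or.inr (Or.inl ⟨τ, hreg⟩)
        · rw [Finset.mem_singleton] at h; subst h
          exact Or.inr (Or.inr ⟨σ, hreg⟩)
      · have hmem : ν = μ := by
          by_contra hn
          have hn2 : ν ∉ ({μ} : Finset (Finset V)) := by simpa using hn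
          exact h0 (by rw [hL]; exact Finset.mem_sdiff.mpr ⟨hν, hn2⟩)
        subst hmem
        left
        refine W.critical_of_step (by omega) hk hfac ?_
        simpa using hL

lemma freepair_card {K : Finset (Finset V)} (hK : IsComplex K) {σ τ : Finset V}
    (h : IsFreePair K σ τ) : σ.card + 1 = τ.card := by
  obtain ⟨hσ, hτ, hst, huniq⟩ := h
  obtain ⟨x, hxτ, hxσ⟩ := Finset.exists_of_ssubset hst
  have hρτ : insert x σ ⊆ τ := Finset.insert_subset hxτ hst.subset
  have hρK : insert x σ ∈ K := (hK τ hτ).2 _ hρτ (Finset.insert_nonempty _ _)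
  have heq : insert x σ = τ := huniq _ hρK (Finset.ssubset_insert hxσ)
  rw [← heq, Finset.card_insert_of_notMem hxσ]

lemma mem_bd {ρ ν : Finset V} : ρ ∈ bd ν ↔ ρ ⊆ ν ∧ ρ.Nonempty ∧ ρ.card + 1 = ν.card := by
  simp [bd, Finset.mem_filter, Finset.mem_powerset, and_assoc]

lemma mem_cobd {K : Finset (Finset V)} {ρ ν : Finset V} :
    ν ∈ cobd K ρ ↔ ν ∈ K ∧ ρ ⊆ ν ∧ ρ.card + 1 = ν.card := by
  simp [cobd, Finset.mem_filter, and_assoc]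

lemma bd_subset {K : Finset (Finset V)} (hK : IsComplex K) {ν : Finset V} (hν : ν ∈ K) :
    bd ν ⊆ K := by
  intro ρ hρ
  rw [mem_bd] at hρ
  exact (hK ν hν).2 ρ hρ.1 hρ.2.1

lemma cobd_subset {K : Finset (Finset V)} {ρ : Finset V} : cobd K ρ ⊆ K :=
  Finset.filter_subset _ _

lemma bd_cobd_exchange {K : Finset (Finset V)} {ν ρ : Finset V}
    (hν : ν ∈ K) (hρ : ρ.Nonempty) : ρ ∈ bd ν ↔ ν ∈ cobd K ρ := by
  rw [mem_bd, mem_cobd]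
  tauto

end Aux
section Aux2
variable {V : Type*} [DecidableEq V]

private lemma insert_injOn_aux {σ : Finset V} {s : Finset V}
    (hs : ∀ x ∈ s, x ∉ σ) : Set.InjOn (fun x => insert x σ) s := by
  intro x hx y hy hxy
  have hx' : x ∉ σ := hs x hx
  have hxy' : insert x σ = insert y σ := hxy
  have : x ∈ insert y σ := by
    rw [← hxy']; exact Finset.mem_insert_self x σ
  rcases Finset.mem_insert.mp this with h | h
  · exact h
  · exact absurd h hx'

lemma bd_bd_even (τ ρ : Finset V) :
    ∑ ν ∈ bd τ, (if ρ ∈ bd ν then (1:ZMod 2) else 0) = 0 := by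
  rw [Finset.sum_boole]
  by_cases h : ρ ⊆ τ ∧ ρ.Nonempty ∧ ρ.card + 2 = τ.card
  · have himg : (bd τ).filter (fun ν => ρ ∈ bd ν)
        = (τ \ ρ).image (fun x => insert x ρ) := by
      ext ν
      simp only [Finset.mem_filter, Finset.mem_image, Finset.mem_sdiff, mem_bd]
      constructor
      · rintro ⟨⟨hν1, hν2, hν3⟩, hρ1, hρ2, hρ3⟩
        have hcard : (ν \ ρ).card = 1 := by
          rw [Finset.card_sdiff_of_subset hρ1]; omega
        obtain ⟨x, hx⟩ := Finset.card_eq_one.mp hcard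
        have hxν : x ∈ ν ∧ x ∉ ρ := by
          have : x ∈ ν \ ρ := hx ▸ Finset.mem_singleton_self x
          exact Finset.mem_sdiff.mp this
        refine ⟨x, ⟨hν1 hxν.1, hxν.2⟩, ?_⟩
        apply Finset.eq_of_subset_of_card_le
        · exact Finset.insert_subset hxν.1 hρ1
        · rw [Finset.card_insert_of_notMem hxν.2]; omega
      · rintro ⟨x, ⟨hxτ, hxρ⟩, rfl⟩
        have hc := Finset.card_insert_of_notMem hxρ
        exact ⟨⟨Finset.insert_subset hxτ h.1, Finset.insert_nonempty _ _, by omega⟩,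
          Finset.subset_insert _ _, h.2.1, by omega⟩
    rw [himg, Finset.card_image_of_injOn (insert_injOn_aux fun x hx =>
      (Finset.mem_sdiff.mp hx).2), Finset.card_sdiff_of_subset h.1]
    have h2 : τ.card - ρ.card = 2 := by omega
    rw [h2]
    exact ZMod.natCast_self 2
  · have hempty : (bd τ).filter (fun ν => ρ ∈ bd ν) = ∅ := by
      rw [Finset.filter_eq_empty_iff]
      intro ν hν hρν
      rw [mem_bd] at hν hρν
      exact h ⟨hρν.1.trans hν.1, hρν.2.1, by omega⟩
    rw [hempty]
    simp

lemma cobd_cobd_even {K : Finset (Finset V)} (hK : IsComplex K) (σ ρ : Finset V) :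
    ∑ ν ∈ cobd K σ, (if ρ ∈ cobd K ν then (1:ZMod 2) else 0) = 0 := by
  rw [Finset.sum_boole]
  by_cases h : ρ ∈ K ∧ σ ⊆ ρ ∧ σ.card + 2 = ρ.card
  · have himg : (cobd K σ).filter (fun ν => ρ ∈ cobd K ν)
        = (ρ \ σ).image (fun x => insert x σ) := by
      ext ν
      simp only [Finset.mem_filter, Finset.mem_image, Finset.mem_sdiff, mem_cobd]
      constructor
      · rintro ⟨⟨hν1, hν2, hν3⟩, hρ1, hρ2, hρ3⟩
        have hcard : (ν \ σ).card = 1 := by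
          rw [Finset.card_sdiff_of_subset hν2]; omega
        obtain ⟨x, hx⟩ := Finset.card_eq_one.mp hcard
        have hxν : x ∈ ν ∧ x ∉ σ := by
          have : x ∈ ν \ σ := hx ▸ Finset.mem_singleton_self x
          exact Finset.mem_sdiff.mp this
        refine ⟨x, ⟨hρ2 hxν.1, hxν.2⟩, ?_⟩
        apply Finset.eq_of_subset_of_card_le
        · exact Finset.insert_subset hxν.1 hν2
        · rw [Finset.card_insert_of_notMem hxν.2]; omega
      · rintro ⟨x, ⟨hxρ, hxσ⟩, rfl⟩
        have hc := Finset.card_insert_of_notMem hxσ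
        have hsub : insert x σ ⊆ ρ := Finset.insert_subset hxρ h.2.1
        have hmemK : insert x σ ∈ K := (hK ρ h.1).2 _ hsub (Finset.insert_nonempty _ _)
        exact ⟨⟨hmemK, Finset.subset_insert _ _, by omega⟩, h.1, hsub, by omega⟩
    rw [himg, Finset.card_image_of_injOn (insert_injOn_aux fun x hx =>
      (Finset.mem_sdiff.mp hx).2), Finset.card_sdiff_of_subset h.2.1]
    have h2 : ρ.card - σ.card = 2 := by omega
    rw [h2]
    exact ZMod.natCast_self 2
  · have hempty : (cobd K σ).filter (fun ν => ρ ∈ cobd K ν) = ∅ := by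
      rw [Finset.filter_eq_empty_iff]
      intro ν hν hρν
      rw [mem_cobd] at hν hρν
      exact h ⟨hρν.1, hν.2.1.trans hρν.2.1, by omega⟩
    rw [hempty]
    simp

end Aux2
section Aux3
variable {V : Type*} [DecidableEq V]

lemma duality (W : MorseSeq V) {Λ Vee : Finset V → Finset (Finset V)}
    (hΛ : IsRefMap W Λ) (hV : IsCorefMap W Vee)
    {κ μ : Finset V} (hκ : W.Critical κ) (hμ : W.Critical μ) :
    (if μ ∈ chainSum (bd κ) Λ then (1:ZMod 2) else 0)
      = (if κ ∈ chainSum (cobd W.cplx μ) Vee then (1:ZMod 2) else 0) := by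
  have hKc : IsComplex W.cplx := W.cpx W.k le_rfl
  have hκK : κ ∈ W.cplx := W.critical_mem hκ
  have hμK : μ ∈ W.cplx := W.critical_mem hμ
  have wayA :
      (∑ ν ∈ W.cplx, (if κ ∈ Vee ν then (1:ZMod 2) else 0) *
        ∑ ρ ∈ W.cplx, (if ρ ∈ bd ν then (1:ZMod 2) else 0) * (if μ ∈ Λ ρ then 1 else 0))
      = (if μ ∈ chainSum (bd κ) Λ then (1:ZMod 2) else 0) := by
    have hterm : ∀ ν ∈ W.cplx,
        (if κ ∈ Vee ν then (1:ZMod 2) else 0) *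
          (∑ ρ ∈ W.cplx, (if ρ ∈ bd ν then (1:ZMod 2) else 0) * (if μ ∈ Λ ρ then 1 else 0))
        = (if κ ∈ Vee ν then (1:ZMod 2) else 0) *
          (if μ ∈ chainSum (bd ν) Λ then 1 else 0) := by
      intro ν hν
      congr 1
      calc ∑ ρ ∈ W.cplx, (if ρ ∈ bd ν then (1:ZMod 2) else 0) * (if μ ∈ Λ ρ then 1 else 0)
          = ∑ ρ ∈ W.cplx, (if ρ ∈ bd ν then (if μ ∈ Λ ρ then (1:ZMod 2) else 0) else 0) :=
            Finset.sum_congr rfl fun ρ _ => boole_mul _ _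
        _ = ∑ ρ ∈ W.cplx ∩ bd ν, (if μ ∈ Λ ρ then (1:ZMod 2) else 0) :=
            Finset.sum_ite_mem _ _ _
        _ = ∑ ρ ∈ bd ν, (if μ ∈ Λ ρ then (1:ZMod 2) else 0) := by
            rw [Finset.inter_eq_right.mpr (bd_subset hKc hν)]
        _ = (if μ ∈ chainSum (bd ν) Λ then 1 else 0) := (ind_mem_chainSum _ _ _).symm
    rw [Finset.sum_congr rfl hterm]
    rw [Finset.sum_eq_single_of_mem κ hκK]
    · rw [hV.2.1 κ hκ]
      simp
    · intro ν hν hne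
      rcases W.trichotomy ν hν with hc | hl | hu
      · rw [hV.2.1 ν hc]
        have : κ ∉ ({ν} : Finset (Finset V)) := by simpa using hne.symm
        rw [if_neg this, zero_mul]
      · rw [(hV.2.2 ν hl).1]
        simp
      · rw [(hΛ.2.2 ν hu).2]
        simp
  have wayB :
      (∑ ν ∈ W.cplx, (if κ ∈ Vee ν then (1:ZMod 2) else 0) *
        ∑ ρ ∈ W.cplx, (if ρ ∈ bd ν then (1:ZMod 2) else 0) * (if μ ∈ Λ ρ then 1 else 0))
      = (if κ ∈ chainSum (cobd W.cplx μ) Vee then (1:ZMod 2) else 0) := by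
    have hexp : ∀ ν ∈ W.cplx,
        (if κ ∈ Vee ν then (1:ZMod 2) else 0) *
          ∑ ρ ∈ W.cplx, (if ρ ∈ bd ν then (1:ZMod 2) else 0) * (if μ ∈ Λ ρ then 1 else 0)
        = ∑ ρ ∈ W.cplx, ((if κ ∈ Vee ν then (1:ZMod 2) else 0) *
            (if ρ ∈ bd ν then (1:ZMod 2) else 0)) * (if μ ∈ Λ ρ then 1 else 0) := by
      intro ν _
      rw [Finset.mul_sum]
      exact Finset.sum_congr rfl fun ρ _ => (mul_assoc _ _ _).symm
    rw [Finset.sum_congr rfl hexp, Finset.sum_comm]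
    have hterm : ∀ ρ ∈ W.cplx,
        (∑ ν ∈ W.cplx, ((if κ ∈ Vee ν then (1:ZMod 2) else 0) *
            (if ρ ∈ bd ν then (1:ZMod 2) else 0)) * (if μ ∈ Λ ρ then 1 else 0))
        = (if κ ∈ chainSum (cobd W.cplx ρ) Vee then (1:ZMod 2) else 0) *
            (if μ ∈ Λ ρ then 1 else 0) := by
      intro ρ hρ
      rw [← Finset.sum_mul]
      congr 1
      calc ∑ ν ∈ W.cplx, (if κ ∈ Vee ν then (1:ZMod 2) else 0) *
              (if ρ ∈ bd ν then (1:ZMod 2) else 0)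
          = ∑ ν ∈ W.cplx, (if ν ∈ cobd W.cplx ρ then (if κ ∈ Vee ν then (1:ZMod 2) else 0) else 0) := by
            refine Finset.sum_congr rfl fun ν hν => ?_
            rw [mul_boole]
            congr 1
            · exact propext ((bd_cobd_exchange hν (hKc ρ hρ).1))
        _ = ∑ ν ∈ W.cplx ∩ cobd W.cplx ρ, (if κ ∈ Vee ν then (1:ZMod 2) else 0) :=
            Finset.sum_ite_mem _ _ _
        _ = ∑ ν ∈ cobd W.cplx ρ, (if κ ∈ Vee ν then (1:ZMod 2) else 0) := by
            rw [Finset.inter_eq_right.mpr cobd_subset]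
        _ = (if κ ∈ chainSum (cobd W.cplx ρ) Vee then (1:ZMod 2) else 0) :=
            (ind_mem_chainSum _ _ _).symm
    rw [Finset.sum_congr rfl hterm]
    rw [Finset.sum_eq_single_of_mem μ hμK]
    · rw [hΛ.2.1 μ hμ]
      simp
    · intro ρ hρ hne
      rcases W.trichotomy ρ hρ with hc | hl | hu
      · rw [hΛ.2.1 ρ hc]
        have : μ ∉ ({ρ} : Finset (Finset V)) := by simpa using hne.symm
        rw [if_neg this, mul_zero]
      · rw [(hV.2.2 ρ hl).2]
        simp
      · rw [(hΛ.2.2 ρ hu).1]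
        simp
  rw [← wayA, wayB]

end Aux3
section Aux4
variable {V : Type*} [DecidableEq V]

lemma G_zero (W : MorseSeq V) {Λ Vee : Finset V → Finset (Finset V)}
    (hΛ : IsRefMap W Λ) (hV : IsCorefMap W Vee)
    {z : Finset (Finset V)} (hcz : ∀ κ ∈ z, W.Critical κ)
    (H : ∀ y, ∑ κ ∈ z, (if y ∈ chainSum (bd κ) Λ then (1:ZMod 2) else 0) = 0) :
    ∀ x ∈ W.cplx,
      ∑ κ ∈ z, (if κ ∈ chainSum (cobd W.cplx x) Vee then (1:ZMod 2) else 0) = 0 := by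
  have hKc : IsComplex W.cplx := W.cpx W.k le_rfl
  suffices claim : ∀ m, ∀ x ∈ W.cplx, x ∉ W.seq (W.k - m) →
      ∑ κ ∈ z, (if κ ∈ chainSum (cobd W.cplx x) Vee then (1:ZMod 2) else 0) = 0 by
    intro x hx
    refine claim W.k x hx ?_
    rw [Nat.sub_self, W.init]
    exact Finset.notMem_empty x
  intro m
  induction m with
  | zero =>
    intro x hx h0
    rw [Nat.sub_zero] at h0
    exact absurd hx h0
  | succ m IH =>
    intro x hxK hx
    by_cases hx2 : x ∈ W.seq (W.k - m)
    case neg => exact IH x hxK hx2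
    have hipos : 1 ≤ W.k - m := by
      rcases Nat.eq_zero_or_pos (W.k - m) with h | h
      · rw [h, W.init] at hx2; exact absurd hx2 (Finset.notMem_empty x)
      · exact h
    have hik : W.k - m ≤ W.k := Nat.sub_le _ _
    have hi1 : W.k - (m+1) = (W.k - m) - 1 := by omega
    rw [hi1] at hx
    rcases W.step (W.k - m) hipos hik with ⟨σ, τ, hfree, hL⟩ | ⟨ν₀, hfac, hL⟩
    · have hxmem : x ∈ ({σ, τ} : Finset (Finset V)) := by
        by_contra hxn
        exact hx (by rw [hL]; exact Finset.mem_sdiff.mpr ⟨hx2, hxn⟩)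
      have hτK : τ ∈ W.cplx := W.seq_mono hik le_rfl hfree.2.1
      have hcard : σ.card + 1 = τ.card := freepair_card (W.cpx _ hik) hfree
      have hreg : W.Regular σ τ := W.regular_of_step hipos hik hfree hL
      rcases Finset.mem_insert.mp hxmem with rfl | hxτ
      · have hz0 := (hV.2.2 x ⟨τ, hreg⟩).2
        refine Finset.sum_eq_zero fun κ _ => ?_
        rw [hz0]
        simp
      · rw [Finset.mem_singleton] at hxτ
        subst hxτ
        have key : ∑ ν ∈ cobd W.cplx σ,
            ∑ κ ∈ z, (if κ ∈ chainSum (cobd W.cplx ν) Vee then (1:ZMod 2) else 0) = 0 := by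
          rw [Finset.sum_comm]
          refine Finset.sum_eq_zero fun κ _ => ?_
          calc ∑ ν ∈ cobd W.cplx σ,
                (if κ ∈ chainSum (cobd W.cplx ν) Vee then (1:ZMod 2) else 0)
              = ∑ ν ∈ cobd W.cplx σ, ∑ ρ ∈ cobd W.cplx ν,
                  (if κ ∈ Vee ρ then (1:ZMod 2) else 0) :=
                Finset.sum_congr rfl fun ν _ => ind_mem_chainSum _ _ _
            _ = ∑ ν ∈ cobd W.cplx σ, ∑ ρ ∈ W.cplx,
                  (if ρ ∈ cobd W.cplx ν then (if κ ∈ Vee ρ then (1:ZMod 2) else 0) else 0) := by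
                refine Finset.sum_congr rfl fun ν _ => ?_
                rw [Finset.sum_ite_mem, Finset.inter_eq_right.mpr cobd_subset]
            _ = ∑ ρ ∈ W.cplx, ∑ ν ∈ cobd W.cplx σ,
                  (if ρ ∈ cobd W.cplx ν then (if κ ∈ Vee ρ then (1:ZMod 2) else 0) else 0) :=
                Finset.sum_comm
            _ = ∑ ρ ∈ W.cplx, (if κ ∈ Vee ρ then (1:ZMod 2) else 0) *
                  ∑ ν ∈ cobd W.cplx σ, (if ρ ∈ cobd W.cplx ν then (1:ZMod 2) else 0) := by
                refine Finset.sum_congr rfl fun ρ _ => ?_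
                rw [Finset.mul_sum]
                exact Finset.sum_congr rfl fun ν _ => (mul_boole _ _).symm
            _ = 0 := by
                refine Finset.sum_eq_zero fun ρ _ => ?_
                rw [cobd_cobd_even hKc σ ρ, mul_zero]
        have hτcobd : x ∈ cobd W.cplx σ := mem_cobd.mpr ⟨hτK, hfree.2.2.1.subset, hcard⟩
        have hsplit := Finset.add_sum_erase (cobd W.cplx σ)
          (fun ν => ∑ κ ∈ z, (if κ ∈ chainSum (cobd W.cplx ν) Vee then (1:ZMod 2) else 0))
          hτcobd
        have hrest : ∑ ν ∈ (cobd W.cplx σ).erase x,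
            (∑ κ ∈ z, (if κ ∈ chainSum (cobd W.cplx ν) Vee then (1:ZMod 2) else 0)) = 0 := by
          refine Finset.sum_eq_zero fun ν hν => ?_
          obtain ⟨hne, hν2⟩ := Finset.mem_erase.mp hν
          have hνK : ν ∈ W.cplx := cobd_subset hν2
          refine IH ν hνK ?_
          intro hmem
          rw [mem_cobd] at hν2
          have hneq : σ ≠ ν := by
            intro he
            rw [he] at hν2
            omega
          have hss : σ ⊂ ν := Finset.ssubset_iff_subset_ne.mpr ⟨hν2.2.1, hneq⟩
          exact hne (hfree.2.2.2 ν hmem hss)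
        rw [hrest, add_zero, key] at hsplit
        simpa using hsplit
    · have hxν : x ∈ ({ν₀} : Finset (Finset V)) := by
        by_contra hxn
        exact hx (by rw [hL]; exact Finset.mem_sdiff.mpr ⟨hx2, hxn⟩)
      rw [Finset.mem_singleton] at hxν
      subst hxν
      calc ∑ κ ∈ z, (if κ ∈ chainSum (cobd W.cplx x) Vee then (1:ZMod 2) else 0)
          = ∑ κ ∈ z, (if x ∈ chainSum (bd κ) Λ then (1:ZMod 2) else 0) :=
            Finset.sum_congr rfl fun κ hκ =>
              (duality W hΛ hV (hcz κ hκ) (W.critical_of_step hipos hik hfac hL)).symm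
        _ = 0 := H x

lemma G'_zero (W : MorseSeq V) {Λ Vee : Finset V → Finset (Finset V)}
    (hΛ : IsRefMap W Λ) (hV : IsCorefMap W Vee)
    {z : Finset (Finset V)} (hcz : ∀ κ ∈ z, W.Critical κ)
    (H : ∀ y, ∑ κ ∈ z, (if y ∈ chainSum (cobd W.cplx κ) Vee then (1:ZMod 2) else 0) = 0) :
    ∀ x ∈ W.cplx,
      ∑ κ ∈ z, (if κ ∈ chainSum (bd x) Λ then (1:ZMod 2) else 0) = 0 := by
  suffices claim : ∀ m, m ≤ W.k → ∀ x ∈ W.seq m,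
      ∑ κ ∈ z, (if κ ∈ chainSum (bd x) Λ then (1:ZMod 2) else 0) = 0 by
    intro x hx
    exact claim W.k le_rfl x hx
  intro m
  induction m with
  | zero =>
    intro _ x hx
    rw [W.init] at hx
    exact absurd hx (Finset.notMem_empty x)
  | succ m IH =>
    intro hk x hx
    by_cases hx0 : x ∈ W.seq m
    · exact IH (by omega) x hx0
    have hstep := W.step (m+1) (by omega) hk
    simp only [Nat.add_sub_cancel] at hstep
    have hcpx : IsComplex (W.seq (m+1)) := W.cpx (m+1) hk
    rcases hstep with ⟨σ, τ, hfree, hL⟩ | ⟨ν₀, hfac, hL⟩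
    · have hxmem : x ∈ ({σ, τ} : Finset (Finset V)) := by
        by_contra hxn
        exact hx0 (by rw [hL]; exact Finset.mem_sdiff.mpr ⟨hx, hxn⟩)
      have hcard : σ.card + 1 = τ.card := freepair_card hcpx hfree
      have hreg : W.Regular σ τ := by
        refine W.regular_of_step (by omega) hk hfree ?_
        simpa using hL
      rcases Finset.mem_insert.mp hxmem with rfl | hxτ
      · -- x = σ lower regular: use the forward recursion
        have key : ∑ ν ∈ bd τ,
            ∑ κ ∈ z, (if κ ∈ chainSum (bd ν) Λ then (1:ZMod 2) else 0) = 0 := by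
          rw [Finset.sum_comm]
          refine Finset.sum_eq_zero fun κ _ => ?_
          calc ∑ ν ∈ bd τ, (if κ ∈ chainSum (bd ν) Λ then (1:ZMod 2) else 0)
              = ∑ ν ∈ bd τ, ∑ ρ ∈ bd ν, (if κ ∈ Λ ρ then (1:ZMod 2) else 0) :=
                Finset.sum_congr rfl fun ν _ => ind_mem_chainSum _ _ _
            _ = ∑ ν ∈ bd τ, ∑ ρ ∈ τ.powerset,
                  (if ρ ∈ bd ν then (if κ ∈ Λ ρ then (1:ZMod 2) else 0) else 0) := by
                refine Finset.sum_congr rfl fun ν hν => ?_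
                rw [Finset.sum_ite_mem, Finset.inter_eq_right.mpr]
                intro ρ hρ
                rw [Finset.mem_powerset]
                exact (mem_bd.mp hρ).1.trans (mem_bd.mp hν).1
            _ = ∑ ρ ∈ τ.powerset, ∑ ν ∈ bd τ,
                  (if ρ ∈ bd ν then (if κ ∈ Λ ρ then (1:ZMod 2) else 0) else 0) :=
                Finset.sum_comm
            _ = ∑ ρ ∈ τ.powerset, (if κ ∈ Λ ρ then (1:ZMod 2) else 0) *
                  ∑ ν ∈ bd τ, (if ρ ∈ bd ν then (1:ZMod 2) else 0) := by
                refine Finset.sum_congr rfl fun ρ _ => ?_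
                rw [Finset.mul_sum]
                exact Finset.sum_congr rfl fun ν _ => (mul_boole _ _).symm
            _ = 0 := by
                refine Finset.sum_eq_zero fun ρ _ => ?_
                rw [bd_bd_even τ ρ, mul_zero]
        have hσbd : x ∈ bd τ :=
          mem_bd.mpr ⟨hfree.2.2.1.subset, (hcpx x hfree.1).1, hcard⟩
        have hsplit := Finset.add_sum_erase (bd τ)
          (fun ν => ∑ κ ∈ z, (if κ ∈ chainSum (bd ν) Λ then (1:ZMod 2) else 0)) hσbd
        have hrest : ∑ ν ∈ (bd τ).erase x,
            (∑ κ ∈ z, (if κ ∈ chainSum (bd ν) Λ then (1:ZMod 2) else 0)) = 0 := by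
          refine Finset.sum_eq_zero fun ν hν => ?_
          obtain ⟨hne, hν2⟩ := Finset.mem_erase.mp hν
          rw [mem_bd] at hν2
          have hν3 : ν ∈ W.seq (m+1) := (hcpx τ hfree.2.1).2 ν hν2.1 hν2.2.1
          have hnτ : ν ≠ τ := by
            intro he
            rw [he] at hν2
            omega
          have hνm : ν ∈ W.seq m := by
            rw [hL]
            refine Finset.mem_sdiff.mpr ⟨hν3, ?_⟩
            simp only [Finset.mem_insert, Finset.mem_singleton]
            tauto
          exact IH (by omega) ν hνm
        rw [hrest, add_zero, key] at hsplit
        simpa using hsplit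
      · rw [Finset.mem_singleton] at hxτ
        subst hxτ
        have hz0 := (hΛ.2.2 x ⟨σ, hreg⟩).2
        refine Finset.sum_eq_zero fun κ _ => ?_
        rw [hz0]
        simp
    · have hxν : x ∈ ({ν₀} : Finset (Finset V)) := by
        by_contra hxn
        exact hx0 (by rw [hL]; exact Finset.mem_sdiff.mpr ⟨hx, hxn⟩)
      rw [Finset.mem_singleton] at hxν
      subst hxν
      have hcx : W.Critical x := by
        refine W.critical_of_step (by omega) hk hfac ?_
        simpa using hL
      calc ∑ κ ∈ z, (if κ ∈ chainSum (bd x) Λ then (1:ZMod 2) else 0)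
          = ∑ κ ∈ z, (if x ∈ chainSum (cobd W.cplx κ) Vee then (1:ZMod 2) else 0) :=
            Finset.sum_congr rfl fun κ hκ => duality W hΛ hV hcx (hcz κ hκ)
        _ = 0 := H x

end Aux4
/-- The extension of a cycle of the critical complex is a cycle of `K`;
the coextension of a cocycle of the cocritical complex is a cocycle of `K`. -/
theorem extension_of_critical_cycle_is_cycle (W : MorseSeq V)
    (Λ Vee : Finset V → Finset (Finset V))
    (hΛ : IsRefMap W Λ) (hV : IsCorefMap W Vee)
    (p : ℕ) (z : Finset (Finset V)) (hz : IsCritChain W p z) :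
    (chainSum z (fun ν => chainSum (bd ν) Λ) = ∅ →
      chainSum (chainSum z (extMap W Vee)) bd = ∅) ∧
    (chainSum z (fun ν => chainSum (cobd W.cplx ν) Vee) = ∅ →
      chainSum (chainSum z (coextMap W Λ)) (cobd W.cplx) = ∅) := by
  have hKc : IsComplex W.cplx := W.cpx W.k le_rfl
  have hcz : ∀ κ ∈ z, W.Critical κ := fun κ h => (hz κ h).1
  constructor
  · intro hyp
    have H : ∀ y, ∑ κ ∈ z, (if y ∈ chainSum (bd κ) Λ then (1:ZMod 2) else 0) = 0 := by
      intro y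
      refine sum_ind_eq_zero_of_notMem ?_
      rw [hyp]
      exact Finset.notMem_empty y
    apply chainSum_eq_empty_of
    intro y
    by_cases hyne : y.Nonempty
    case neg =>
      refine Finset.sum_eq_zero fun ν _ => ?_
      exact if_neg fun hm => hyne (mem_bd.mp hm).2.1
    have hsub : chainSum z (extMap W Vee) ⊆ W.cplx := by
      intro ν hν
      obtain ⟨κ, _, hκ⟩ := Finset.mem_biUnion.mp (Finset.mem_filter.mp hν).1
      exact (Finset.mem_filter.mp hκ).1
    have main : ∑ ν ∈ chainSum z (extMap W Vee), (if y ∈ bd ν then (1:ZMod 2) else 0)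
        = ∑ κ ∈ z, (if κ ∈ chainSum (cobd W.cplx y) Vee then (1:ZMod 2) else 0) := by
      calc ∑ ν ∈ chainSum z (extMap W Vee), (if y ∈ bd ν then (1:ZMod 2) else 0)
          = ∑ ν ∈ W.cplx, (if ν ∈ chainSum z (extMap W Vee) then
              (if y ∈ bd ν then (1:ZMod 2) else 0) else 0) := by
            rw [Finset.sum_ite_mem, Finset.inter_eq_right.mpr hsub]
        _ = ∑ ν ∈ W.cplx, (∑ κ ∈ z, (if κ ∈ Vee ν then (1:ZMod 2) else 0)) *
              (if y ∈ bd ν then (1:ZMod 2) else 0) := by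
            refine Finset.sum_congr rfl fun ν hν => ?_
            rw [← boole_mul]
            congr 1
            rw [ind_mem_chainSum]
            refine Finset.sum_congr rfl fun κ _ => ?_
            congr 1
            simp [extMap, Finset.mem_filter, hν]
        _ = ∑ ν ∈ W.cplx, ∑ κ ∈ z, (if κ ∈ Vee ν then (1:ZMod 2) else 0) *
              (if y ∈ bd ν then (1:ZMod 2) else 0) :=
            Finset.sum_congr rfl fun ν _ => Finset.sum_mul _ _ _
        _ = ∑ κ ∈ z, ∑ ν ∈ W.cplx, (if κ ∈ Vee ν then (1:ZMod 2) else 0) *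
              (if y ∈ bd ν then (1:ZMod 2) else 0) := Finset.sum_comm
        _ = ∑ κ ∈ z, (if κ ∈ chainSum (cobd W.cplx y) Vee then (1:ZMod 2) else 0) := by
            refine Finset.sum_congr rfl fun κ _ => ?_
            calc ∑ ν ∈ W.cplx, (if κ ∈ Vee ν then (1:ZMod 2) else 0) *
                    (if y ∈ bd ν then (1:ZMod 2) else 0)
                = ∑ ν ∈ W.cplx, (if ν ∈ cobd W.cplx y then
                    (if κ ∈ Vee ν then (1:ZMod 2) else 0) else 0) := by
                  refine Finset.sum_congr rfl fun ν hν => ?_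
                  rw [mul_boole]
                  congr 1
                  exact propext (bd_cobd_exchange hν hyne)
              _ = ∑ ν ∈ W.cplx ∩ cobd W.cplx y, (if κ ∈ Vee ν then (1:ZMod 2) else 0) :=
                  Finset.sum_ite_mem _ _ _
              _ = ∑ ν ∈ cobd W.cplx y, (if κ ∈ Vee ν then (1:ZMod 2) else 0) := by
                  rw [Finset.inter_eq_right.mpr cobd_subset]
              _ = (if κ ∈ chainSum (cobd W.cplx y) Vee then (1:ZMod 2) else 0) :=
                  (ind_mem_chainSum _ _ _).symm
    rw [main]
    by_cases hyK : y ∈ W.cplx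
    · exact G_zero W hΛ hV hcz H y hyK
    · have hempty : cobd W.cplx y = ∅ := by
        rw [Finset.eq_empty_iff_forall_notMem]
        intro ν hν
        rw [mem_cobd] at hν
        exact hyK ((hKc ν hν.1).2 y hν.2.1 hyne)
      refine Finset.sum_eq_zero fun κ _ => ?_
      rw [hempty]
      have : chainSum (∅ : Finset (Finset V)) Vee = ∅ := by
        simp [chainSum]
      rw [this]
      simp
  · intro hyp
    have H : ∀ y, ∑ κ ∈ z, (if y ∈ chainSum (cobd W.cplx κ) Vee then (1:ZMod 2) else 0) = 0 := by
      intro y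
      refine sum_ind_eq_zero_of_notMem ?_
      rw [hyp]
      exact Finset.notMem_empty y
    apply chainSum_eq_empty_of
    intro y
    by_cases hyK : y ∈ W.cplx
    case neg =>
      refine Finset.sum_eq_zero fun ν _ => ?_
      exact if_neg fun hm => hyK (mem_cobd.mp hm).1
    have hsub : chainSum z (coextMap W Λ) ⊆ W.cplx := by
      intro ν hν
      obtain ⟨κ, _, hκ⟩ := Finset.mem_biUnion.mp (Finset.mem_filter.mp hν).1
      exact (Finset.mem_filter.mp hκ).1
    have main : ∑ ν ∈ chainSum z (coextMap W Λ), (if y ∈ cobd W.cplx ν then (1:ZMod 2) else 0)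
        = ∑ κ ∈ z, (if κ ∈ chainSum (bd y) Λ then (1:ZMod 2) else 0) := by
      calc ∑ ν ∈ chainSum z (coextMap W Λ), (if y ∈ cobd W.cplx ν then (1:ZMod 2) else 0)
          = ∑ ν ∈ W.cplx, (if ν ∈ chainSum z (coextMap W Λ) then
              (if y ∈ cobd W.cplx ν then (1:ZMod 2) else 0) else 0) := by
            rw [Finset.sum_ite_mem, Finset.inter_eq_right.mpr hsub]
        _ = ∑ ν ∈ W.cplx, (∑ κ ∈ z, (if κ ∈ Λ ν then (1:ZMod 2) else 0)) *
              (if y ∈ cobd W.cplx ν then (1:ZMod 2) else 0) := by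
            refine Finset.sum_congr rfl fun ν hν => ?_
            rw [← boole_mul]
            congr 1
            rw [ind_mem_chainSum]
            refine Finset.sum_congr rfl fun κ _ => ?_
            congr 1
            simp [coextMap, Finset.mem_filter, hν]
        _ = ∑ ν ∈ W.cplx, ∑ κ ∈ z, (if κ ∈ Λ ν then (1:ZMod 2) else 0) *
              (if y ∈ cobd W.cplx ν then (1:ZMod 2) else 0) :=
            Finset.sum_congr rfl fun ν _ => Finset.sum_mul _ _ _
        _ = ∑ κ ∈ z, ∑ ν ∈ W.cplx, (if κ ∈ Λ ν then (1:ZMod 2) else 0) *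
              (if y ∈ cobd W.cplx ν then (1:ZMod 2) else 0) := Finset.sum_comm
        _ = ∑ κ ∈ z, (if κ ∈ chainSum (bd y) Λ then (1:ZMod 2) else 0) := by
            refine Finset.sum_congr rfl fun κ _ => ?_
            calc ∑ ν ∈ W.cplx, (if κ ∈ Λ ν then (1:ZMod 2) else 0) *
                    (if y ∈ cobd W.cplx ν then (1:ZMod 2) else 0)
                = ∑ ν ∈ W.cplx, (if ν ∈ bd y then
                    (if κ ∈ Λ ν then (1:ZMod 2) else 0) else 0) := by
                  refine Finset.sum_congr rfl fun ν hν => ?_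
                  rw [mul_boole]
                  congr 1
                  exact propext (bd_cobd_exchange hyK (hKc ν hν).1).symm
              _ = ∑ ν ∈ W.cplx ∩ bd y, (if κ ∈ Λ ν then (1:ZMod 2) else 0) :=
                  Finset.sum_ite_mem _ _ _
              _ = ∑ ν ∈ bd y, (if κ ∈ Λ ν then (1:ZMod 2) else 0) := by
                  rw [Finset.inter_eq_right.mpr (bd_subset hKc hyK)]
              _ = (if κ ∈ chainSum (bd y) Λ then (1:ZMod 2) else 0) :=
                  (ind_mem_chainSum _ _ _).symm
    rw [main]
    exact G'_zero W hΛ hV hcz H y hyK
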